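/- Let (X,Q,H,Δ) be a reversible energy landscape satisfying the degenerate series Condition. For any state x ∉ {x₁¹,...,x₁ⁿ} with H(x) ≤ H(x₁ʳ) for some fixed r, we have Φ(x, x₀) - H(x) < Γ_m and Φ(x, x₁ʳ) - H(x₁ʳ) ≥ Γ_m. -/

import Mathlib

open Filter Topology
open scoped Classical

/-- Height along a path starting at `x` with subsequent states `l`. -/
def pathHeight {S : Type*} (H : S → ℝ) (Δ : S → S → ℝ) : S → List S → ℝ
  | x, [] => H x
  | x, y :: l => max (H x + Δ x y) (pathHeight H Δ y l)

/-- Communication height between two states. -/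
noncomputable def commHeight {S : Type*} (H : S → ℝ) (Δ : S → S → ℝ) (x y : S) : ℝ :=
  sInf {c | ∃ l : List S,
    (x :: l).getLast (List.cons_ne_nil x l) = y ∧ c = pathHeight H Δ x l}

/-- Communication height between a state and a set. -/
noncomputable def commSet {S : Type*} (H : S → ℝ) (Δ : S → S → ℝ) (x : S) (A : Set S) : ℝ :=
  sInf (commHeight H Δ x '' A)

/-- The states with energy strictly below that of `x`. -/
def Ibelow {S : Type*} (H : S → ℝ) (x : S) : Set S := {y | H y < H x}

/-- Stability level of a state. -/
noncomputable def stabLevel {S : Type*} (H : S → ℝ) (Δ : S → S → ℝ) (x : S) : ℝ :=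
  commSet H Δ x (Ibelow H x) - H x

/-- Ground states: global minima of the energy. -/
def stableSet {S : Type*} (H : S → ℝ) : Set S := {x | ∀ y, H x ≤ H y}

/-- Maximal stability level among non-stable states. -/
noncomputable def gammaM {S : Type*} (H : S → ℝ) (Δ : S → S → ℝ) : ℝ :=
  sSup (stabLevel H Δ '' (stableSet H)ᶜ)

/-- Metastable states: non-stable states attaining the maximal stability level. -/
def metaSet {S : Type*} (H : S → ℝ) (Δ : S → S → ℝ) : Set S :=
  {x | x ∉ stableSet H ∧ stabLevel H Δ x = gammaM H Δ}

/-!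
Going down from `x` to the ground state `x₀` one stability level at a time shows
`Φ(x, x₀) ≤ Γ_m + H x`, strictly when `x` is not metastable. For `x` as in the theorem this gives
the first bound. If `x₁ʳ` could reach `x` below `Γ_m + H(x₁ʳ)`, then, as `H x ≤ H(x₁ʳ)`, it
could reach `x₀` below that height too, contradicting `V(x₁ʳ) = Γ_m` since `x₀ ∈ I(x₁ʳ)`.
-/

section Landscape

variable {S : Type*} {H : S → ℝ} {Δ : S → S → ℝ}

theorem le_pathHeight (hΔ : ∀ x y, 0 ≤ Δ x y) :
    ∀ (x : S) (l : List S), H x ≤ pathHeight H Δ x l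
  | _, [] => le_rfl
  | x, y :: _ => le_max_of_le_left (le_add_of_nonneg_right (hΔ x y))

theorem pathHeight_append_le :
    ∀ (x : S) (l₁ l₂ : List S), pathHeight H Δ x (l₁ ++ l₂) ≤
      max (pathHeight H Δ x l₁) (pathHeight H Δ ((x :: l₁).getLast (List.cons_ne_nil x l₁)) l₂)
  | _, [], _ => by simp
  | x, a :: t, l₂ => by
      simp only [List.cons_append, pathHeight, List.getLast_cons (List.cons_ne_nil a t), max_assoc]
      exact max_le_max le_rfl (pathHeight_append_le a t l₂)

theorem pathHeight_concat (hΔ : ∀ x y, 0 ≤ Δ x y) (hrev : ∀ x y, H x + Δ x y = H y + Δ y x) :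
    ∀ (x : S) (l : List S) (z : S), pathHeight H Δ x (l ++ [z]) =
      max (pathHeight H Δ x l)
        (H ((x :: l).getLast (List.cons_ne_nil x l)) +
          Δ ((x :: l).getLast (List.cons_ne_nil x l)) z)
  | x, [], z => by
      have hz : H z ≤ H x + Δ x z := by rw [hrev]; linarith [hΔ z x]
      have hx : H x ≤ H x + Δ x z := by linarith [hΔ x z]
      simp only [List.nil_append, pathHeight, List.getLast_singleton, max_eq_left hz,
        max_eq_right hx]
  | x, a :: t, z => by
      simp only [List.cons_append, pathHeight, pathHeight_concat hΔ hrev a t z,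
        List.getLast_cons (List.cons_ne_nil a t), max_assoc]

/-- Reversibility makes the reversed path have the same height. -/
theorem exists_pathHeight_reverse (hΔ : ∀ x y, 0 ≤ Δ x y)
    (hrev : ∀ x y, H x + Δ x y = H y + Δ y x) :
    ∀ (x : S) (l : List S), ∃ l' : List S,
      ((x :: l).getLast (List.cons_ne_nil x l) :: l').getLast (List.cons_ne_nil _ l') = x ∧
        pathHeight H Δ ((x :: l).getLast (List.cons_ne_nil x l)) l' = pathHeight H Δ x l
  | x, [] => ⟨[], rfl, rfl⟩
  | x, a :: t => by
      obtain ⟨l', hlast, hheight⟩ := exists_pathHeight_reverse hΔ hrev a t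
      rw [List.getLast_cons (List.cons_ne_nil a t)]
      refine ⟨l' ++ [x], List.getLast_concat (l := _ :: l'), ?_⟩
      rw [pathHeight_concat hΔ hrev, hlast, hheight, hrev, pathHeight, max_comm]

theorem pathHeight_mem_range_union :
    ∀ (x : S) (l : List S), pathHeight H Δ x l ∈
      Set.range (fun p : S × S => H p.1 + Δ p.1 p.2) ∪ Set.range H
  | x, [] => Or.inr ⟨x, rfl⟩
  | x, y :: l => by
      rcases max_choice (H x + Δ x y) (pathHeight H Δ y l) with h | h <;> rw [pathHeight, h]
      exacts [Or.inl ⟨(x, y), rfl⟩, pathHeight_mem_range_union y l]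

/-- `commHeight H Δ x y` is, definitionally, the `sInf` of this set. -/
def pathHeights (H : S → ℝ) (Δ : S → S → ℝ) (x y : S) : Set ℝ :=
  {c | ∃ l : List S, (x :: l).getLast (List.cons_ne_nil x l) = y ∧ c = pathHeight H Δ x l}

theorem lt_of_mem_stableSet_of_notMem {x₀ x : S} (h₀ : x₀ ∈ stableSet H)
    (hx : x ∉ stableSet H) : H x₀ < H x := by
  obtain ⟨y, hy⟩ : ∃ y, H y < H x := by simpa [stableSet] using hx
  exact (h₀ y).trans_lt hy

section Finite

variable [Finite S]

theorem pathHeights_finite (x y : S) : (pathHeights H Δ x y).Finite := by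
  refine ((Set.finite_range fun p : S × S => H p.1 + Δ p.1 p.2).union
    (Set.finite_range H)).subset ?_
  rintro c ⟨l, -, rfl⟩
  exact pathHeight_mem_range_union (Δ := Δ) x l

theorem commHeight_le_pathHeight {x y : S} {l : List S}
    (hl : (x :: l).getLast (List.cons_ne_nil x l) = y) :
    commHeight H Δ x y ≤ pathHeight H Δ x l :=
  csInf_le (pathHeights_finite x y).bddBelow ⟨l, hl, rfl⟩

theorem exists_pathHeight_eq_commHeight (x y : S) : ∃ l : List S,
    (x :: l).getLast (List.cons_ne_nil x l) = y ∧ pathHeight H Δ x l = commHeight H Δ x y := by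
  obtain ⟨l, hl, h⟩ := (show (pathHeights H Δ x y).Nonempty from
    ⟨_, [y], rfl, rfl⟩).csInf_mem (pathHeights_finite x y)
  exact ⟨l, hl, h.symm⟩

theorem commHeight_self_le (x : S) : commHeight H Δ x x ≤ H x :=
  commHeight_le_pathHeight (l := []) rfl

theorem le_commHeight (hΔ : ∀ x y, 0 ≤ Δ x y) (x y : S) : H x ≤ commHeight H Δ x y := by
  obtain ⟨l, -, hl⟩ := exists_pathHeight_eq_commHeight (H := H) (Δ := Δ) x y
  exact hl ▸ le_pathHeight hΔ x l

theorem commHeight_le_max (x y z : S) :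
    commHeight H Δ x z ≤ max (commHeight H Δ x y) (commHeight H Δ y z) := by
  obtain ⟨l₁, hy, h₁⟩ := exists_pathHeight_eq_commHeight (H := H) (Δ := Δ) x y
  obtain ⟨l₂, hz, h₂⟩ := exists_pathHeight_eq_commHeight (H := H) (Δ := Δ) y z
  have hlast : (x :: (l₁ ++ l₂)).getLast (List.cons_ne_nil _ _) = z := by
    cases l₂ with
    | nil => simpa [hy] using hz
    | cons b t =>
      rw [List.getLast_cons (by simp), List.getLast_append_of_ne_nil _ (List.cons_ne_nil b t)]
      rwa [List.getLast_cons (List.cons_ne_nil b t)] at hz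
  calc commHeight H Δ x z ≤ pathHeight H Δ x (l₁ ++ l₂) := commHeight_le_pathHeight hlast
    _ ≤ max (pathHeight H Δ x l₁) (pathHeight H Δ y l₂) := hy ▸ pathHeight_append_le x l₁ l₂
    _ = max (commHeight H Δ x y) (commHeight H Δ y z) := by rw [h₁, h₂]

theorem commHeight_comm (hΔ : ∀ x y, 0 ≤ Δ x y) (hrev : ∀ x y, H x + Δ x y = H y + Δ y x)
    (x y : S) : commHeight H Δ x y = commHeight H Δ y x := by
  have key : ∀ a b : S, commHeight H Δ a b ≤ commHeight H Δ b a := by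
    intro a b
    obtain ⟨l, rfl, hl⟩ := exists_pathHeight_eq_commHeight (H := H) (Δ := Δ) b a
    obtain ⟨l', hlast, hheight⟩ := exists_pathHeight_reverse hΔ hrev b l
    exact hl ▸ hheight ▸ commHeight_le_pathHeight hlast
  exact le_antisymm (key x y) (key y x)

theorem exists_mem_commSet_eq {x : S} {A : Set S} (hA : A.Nonempty) :
    ∃ y ∈ A, commSet H Δ x A = commHeight H Δ x y := by
  obtain ⟨y, hy, h⟩ := (hA.image _).csInf_mem (A.toFinite.image (commHeight H Δ x))
  exact ⟨y, hy, h.symm⟩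

theorem commSet_le_commHeight {x y : S} {A : Set S} (hy : y ∈ A) :
    commSet H Δ x A ≤ commHeight H Δ x y :=
  csInf_le (A.toFinite.image _).bddBelow ⟨y, hy, rfl⟩

theorem stabLevel_le_gammaM {x : S} (hx : x ∉ stableSet H) : stabLevel H Δ x ≤ gammaM H Δ :=
  le_csSup ((stableSet H)ᶜ.toFinite.image _).bddAbove ⟨x, hx, rfl⟩

/-- One step of the descent to the ground state: leave `x` at height `V_x + H x` for the
cheapest state below it. -/
theorem exists_lt_commHeight_le_max {x₀ x : S} (h₀ : x₀ ∈ stableSet H) (hx : x ∉ stableSet H) :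
    ∃ y, H y < H x ∧
      commHeight H Δ x x₀ ≤ max (stabLevel H Δ x + H x) (commHeight H Δ y x₀) := by
  obtain ⟨y, hy, hcomm⟩ := exists_mem_commSet_eq (Δ := Δ) (x := x) (A := Ibelow H x)
    ⟨x₀, lt_of_mem_stableSet_of_notMem h₀ hx⟩
  refine ⟨y, hy, ?_⟩
  rw [stabLevel, hcomm, sub_add_cancel]
  exact commHeight_le_max x y x₀

theorem commHeight_le_gammaM_add {x₀ : S} (hS : stableSet H = {x₀}) (hΓ : 0 ≤ gammaM H Δ)
    (x : S) : commHeight H Δ x x₀ ≤ gammaM H Δ + H x := by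
  induction x using (Finite.wellFounded_of_trans_of_irrefl (InvImage (· < ·) H)).induction with
  | h x ih =>
    by_cases hx : x = x₀
    · subst hx
      linarith [commHeight_self_le (H := H) (Δ := Δ) x]
    · have hxs : x ∉ stableSet H := hS ▸ hx
      obtain ⟨y, hy, hle⟩ := exists_lt_commHeight_le_max (Δ := Δ) (hS ▸ rfl : x₀ ∈ stableSet H) hxs
      refine hle.trans (max_le ?_ ?_)
      · linarith [stabLevel_le_gammaM (Δ := Δ) hxs]
      · linarith [ih y hy]

theorem commHeight_lt_gammaM_add {x₀ x : S} (hS : stableSet H = {x₀}) (hΓ : 0 < gammaM H Δ)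
    (hx : x ∉ metaSet H Δ) : commHeight H Δ x x₀ < gammaM H Δ + H x := by
  by_cases hx₀ : x = x₀
  · subst hx₀
    linarith [commHeight_self_le (H := H) (Δ := Δ) x]
  · have hxs : x ∉ stableSet H := hS ▸ hx₀
    obtain ⟨y, hy, hle⟩ := exists_lt_commHeight_le_max (Δ := Δ) (hS ▸ rfl : x₀ ∈ stableSet H) hxs
    have hV : stabLevel H Δ x < gammaM H Δ :=
      (stabLevel_le_gammaM hxs).lt_of_ne fun h => hx ⟨hxs, h⟩
    refine hle.trans_lt (max_lt ?_ ?_)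
    · linarith
    · linarith [commHeight_le_gammaM_add (Δ := Δ) hS hΓ.le y]

theorem gammaM_add_le_commHeight {x₀ x : S} (h₀ : x₀ ∈ stableSet H) (hx : x ∈ metaSet H Δ) :
    gammaM H Δ + H x ≤ commHeight H Δ x x₀ := by
  have hV : stabLevel H Δ x = gammaM H Δ := hx.2
  rw [stabLevel] at hV
  have hx₀ : x₀ ∈ Ibelow H x := lt_of_mem_stableSet_of_notMem h₀ hx.1
  linarith [commSet_le_commHeight (H := H) (Δ := Δ) (x := x) hx₀]

end Finite

end Landscape

theorem comm_bounds_below_x1_general {S : Type*} [Fintype S]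
    (H : S → ℝ) (Δ : S → S → ℝ)
    (hΔ : ∀ x y, 0 ≤ Δ x y) (hrev : ∀ x y, H x + Δ x y = H y + Δ y x)
    (n : ℕ) (x₀ x₂ : S) (x₁ : Fin n → S)
    (hS : stableSet H = {x₀})
    (hM : metaSet H Δ = insert x₂ (Set.range x₁))
    (hE2 : ∀ r, H (x₁ r) < H x₂)
    (hBar : ∀ r q, commHeight H Δ (x₁ r) (x₁ q) - H (x₁ r) < gammaM H Δ)
    (x : S) (hx : x ∉ Set.range x₁) (r : Fin n) (hHx : H x ≤ H (x₁ r)) :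
    commHeight H Δ x x₀ - H x < gammaM H Δ ∧
    gammaM H Δ ≤ commHeight H Δ x (x₁ r) - H (x₁ r) := by
  have hΓ : 0 < gammaM H Δ := by linarith [hBar r r, le_commHeight (H := H) hΔ (x₁ r) (x₁ r)]
  have hxM : x ∉ metaSet H Δ := by
    rw [hM]
    rintro (rfl | hx₁)
    exacts [(hE2 r).not_ge hHx, hx hx₁]
  have hx₀ : commHeight H Δ x x₀ < gammaM H Δ + H x := commHeight_lt_gammaM_add hS hΓ hxM
  refine ⟨by linarith, le_of_not_gt fun hlt => ?_⟩
  have hr : x₁ r ∈ metaSet H Δ := hM ▸ Or.inr ⟨r, rfl⟩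
  refine (gammaM_add_le_commHeight (hS ▸ rfl : x₀ ∈ stableSet H) hr).not_gt ?_
  calc commHeight H Δ (x₁ r) x₀ ≤ max (commHeight H Δ (x₁ r) x) (commHeight H Δ x x₀) :=
        commHeight_le_max _ _ _
    _ < gammaM H Δ + H (x₁ r) := by
      rw [commHeight_comm hΔ hrev]
      exact max_lt (by linarith) (by linarith)

/-- For any state `x` outside `{x₁¹,…,x₁ⁿ}` with `H(x) ≤ H(x₁ʳ)`:
`Φ(x,x₀) - H(x) < Γ_m` and `Φ(x,x₁ʳ) - H(x₁ʳ) ≥ Γ_m`. -/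
theorem comm_bounds_below_x1 {S : Type*} [Fintype S]
    (H : S → ℝ) (Δ : S → S → ℝ)
    (hΔ : ∀ x y, 0 ≤ Δ x y) (hrev : ∀ x y, H x + Δ x y = H y + Δ y x)
    (n : ℕ) (hn : 1 ≤ n) (x₀ x₂ : S) (x₁ : Fin n → S)
    (hinj : Function.Injective x₁)
    (hS : stableSet H = {x₀})
    (hM : metaSet H Δ = insert x₂ (Set.range x₁))
    (hE2 : ∀ r, H (x₁ r) < H x₂)
    (hEq : ∀ r q, H (x₁ r) = H (x₁ q))
    (hBar : ∀ r q, commHeight H Δ (x₁ r) (x₁ q) - H (x₁ r) < gammaM H Δ)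
    (x : S) (hx : x ∉ Set.range x₁) (r : Fin n) (hHx : H x ≤ H (x₁ r)) :
    commHeight H Δ x x₀ - H x < gammaM H Δ ∧
    gammaM H Δ ≤ commHeight H Δ x (x₁ r) - H (x₁ r) :=
  comm_bounds_below_x1_general H Δ hΔ hrev n x₀ x₂ x₁ hS hM hE2 hBar x hx r hHx
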